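/- arXiv:2507.12766 — 3 statements merged into one kernel-verified Lean document; each statement's English description precedes it below -/
import Mathlib

section
/- Existence of auxiliary variables dominating the elliptic PINN loss (Theorem 2.2). For all parameters W₁∈ℝ^{M×d}, b₁∈ℝ^M, W₂∈ℝ^{M×M}, b₂∈ℝ^M, W₃∈ℝ^{1×M}, b₃∈ℝ, there exist auxiliary variables a₁, a₂, {d_{1i}}_{i=1}^d, {d_{2i}}_{i=1}^d, {q_i}_{i=1}^d in ℝ^{M×N} such that J^e_S ≤ J^e. -/
/-!
Take the auxiliary variables to be the quantities they stand for: `a₁ = W₁X + b₁𝟙ᵀ`,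
`a₂ = W₂σ(a₁) + b₂𝟙ᵀ`, `d_{1i} = W₁(:,i)𝟙ᵀ`, and `d_{2i}`, `q_i` the first and second
derivatives of `a₂` in the direction `x_i`. Then every penalty term of `J^e_S` vanishes, and
the LySep residual is the PINN residual: on the line through `x_n` in direction `e_i` the
network is a function of one variable, and the chain and product rules give
`∂ᵢ(c ∂ᵢψ_e) = ∂ᵢc (2xᵢφ + (‖x‖² - 1)∂ᵢφ) + c (2φ + 4xᵢ∂ᵢφ + (‖x‖² - 1)∂ᵢ²φ)`,
which summed over `i` regroups into `K^e φ + Σᵢ K^e_i ∂ᵢφ + K̂^e Σᵢ ∂ᵢ²φ`.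
So `J^e_S = J^e` for this choice.
-/

open scoped BigOperators

noncomputable section

/-- Partial derivative `∂_{x_i} f` at `x`. -/
def pd {m : ℕ} (f : (Fin m → ℝ) → ℝ) (i : Fin m) (x : Fin m → ℝ) : ℝ :=
  fderiv ℝ f x (Pi.single i 1)

/-- Squared Euclidean norm of the `n`-th column of an `M × N` matrix. -/
def colSq {M N : ℕ} (A : Fin M → Fin N → ℝ) (n : Fin N) : ℝ := ∑ j, (A j n) ^ 2

/-- Squared Frobenius norm of an `M × N` matrix. -/
def froSq {M N : ℕ} (A : Fin M → Fin N → ℝ) : ℝ := ∑ n, colSq A n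

/-- Squared Frobenius norm of a row vector (`1 × N` matrix). -/
def vSq {N : ℕ} (v : Fin N → ℝ) : ℝ := ∑ n, (v n) ^ 2

/-- Entrywise sup-norm `|v|_∞` of a row vector. -/
def nsup {N : ℕ} (v : Fin N → ℝ) : ℝ := ⨆ n, |v n|

/-- Weighted squared norm `‖A‖_D²`, where `Dsq n = D(n,n)²` are the squared diagonal
entries of the diagonal weight matrix `D`. -/
def wSq {M N : ℕ} (Dsq : Fin N → ℝ) (A : Fin M → Fin N → ℝ) : ℝ := ∑ n, Dsq n * colSq A n

/-- The constant `C₁ = max{B_{σ'}·max{1,B_{σ'}}, C_{σ'}·max{1,B_{σ'},C_σ}}`. -/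
def constC1 (Cσ Cσ' Bσ' : ℝ) : ℝ :=
  max (Bσ' * max 1 Bσ') (Cσ' * max (max 1 Bσ') Cσ)

/-- The constant `C₂`. -/
def constC2 (Cσ' Cσ'' Bσ' Bσ'' : ℝ) : ℝ :=
  max (Bσ'' * max (max (max (max 1 Bσ') Cσ') (Bσ' ^ 2)) (Bσ' * Cσ'))
    (max 1 Cσ' * max Cσ' (Bσ' * Cσ''))

/-- The constant `C = max{1, 2C_σ², 2C_σ⁴, 5C₁², 14C₂²}`. -/
def constC (Cσ Cσ' Cσ'' Bσ' Bσ'' : ℝ) : ℝ :=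
  max (max (max (max 1 (2 * Cσ ^ 2)) (2 * Cσ ^ 4)) (5 * constC1 Cσ Cσ' Bσ' ^ 2))
    (14 * constC2 Cσ' Cσ'' Bσ' Bσ'' ^ 2)

/-- Data of the elliptic PINN model with a three-layer fully connected network:
activation `σ`, PDE coefficient `c`, feature points `X` (columns `x_n`), data `Y`,
and network parameters `W₁, b₁, W₂, b₂, W₃, b₃`. -/
structure EllData (d M N : ℕ) where
  σ : ℝ → ℝ
  c : (Fin d → ℝ) → ℝ
  X : Fin d → Fin N → ℝ
  Y : Fin N → ℝ
  W1 : Fin M → Fin d → ℝ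
  b1 : Fin M → ℝ
  W2 : Fin M → Fin M → ℝ
  b2 : Fin M → ℝ
  W3 : Fin M → ℝ
  b3 : ℝ

/-- Auxiliary variables of the elliptic LySep model: `a₁, a₂` and, for each `i`,
`d_{1i}, d_{2i}, q_i`, all in `ℝ^{M×N}`. -/
structure EllAux (d M N : ℕ) where
  a1 : Fin M → Fin N → ℝ
  a2 : Fin M → Fin N → ℝ
  d1 : Fin d → Fin M → Fin N → ℝ
  d2 : Fin d → Fin M → Fin N → ℝ
  q  : Fin d → Fin M → Fin N → ℝ

namespace EllData

variable {d M N : ℕ} (P : EllData d M N) (A : EllAux d M N)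

/-- `σ'` -/
def σ' : ℝ → ℝ := deriv P.σ

/-- `σ''` -/
def σ'' : ℝ → ℝ := deriv (deriv P.σ)

/-- the `n`-th feature point `x_n` -/
def x (n : Fin N) : Fin d → ℝ := fun i => P.X i n

/-- the three-layer network `φ(x;θ) = W₃σ(W₂σ(W₁x+b₁)+b₂)+b₃` -/
def phi (y : Fin d → ℝ) : ℝ :=
  (∑ j, P.W3 j * P.σ ((∑ k, P.W2 j k * P.σ ((∑ i, P.W1 k i * y i) + P.b1 k)) + P.b2 j)) + P.b3

/-- `ψ_e(x;θ) = (‖x‖₂² − 1)φ(x;θ)` -/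
def psiE (y : Fin d → ℝ) : ℝ := ((∑ i, (y i) ^ 2) - 1) * P.phi y

/-- the `n`-th entry of the PINN residual `Σ_i ∂_{x_i}(c·∂_{x_i}ψ_e)(X) − Y` -/
def pinnRes (n : Fin N) : ℝ :=
  (∑ i, pd (fun y => P.c y * pd P.psiE i y) i (P.x n)) - P.Y n

/-- the PINN loss `J^e` -/
def Je : ℝ := (1 / (N : ℝ)) * ∑ n, (P.pinnRes n) ^ 2

/-- `c(X)` -/
def cX : Fin N → ℝ := fun n => P.c (P.x n)

/-- `∂_{x_i} c(X)` -/
def dcX (i : Fin d) : Fin N → ℝ := fun n => pd P.c i (P.x n)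

/-- `X̂`, the row vector of `‖x_n‖₂²` -/
def Xhat : Fin N → ℝ := fun n => ∑ i, (P.X i n) ^ 2

/-- `K^e = 2(d·c(X) + Σ_i X(i,:)*∂_{x_i}c(X))` -/
def Ke : Fin N → ℝ := fun n => 2 * ((d : ℝ) * P.cX n + ∑ i, P.X i n * P.dcX i n)

/-- `K̂^e = c(X)*(X̂−1)` -/
def Khat : Fin N → ℝ := fun n => P.cX n * (P.Xhat n - 1)

/-- `K^e_i = 4X(i,:)*c(X) + ∂_{x_i}c(X)*(X̂−1)` -/
def Ki (i : Fin d) : Fin N → ℝ := fun n => 4 * P.X i n * P.cX n + P.dcX i n * (P.Xhat n - 1)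

/-- `‖W₃‖_F²` -/
def w3sq : ℝ := ∑ j, (P.W3 j) ^ 2

/-- `‖W₂‖_F²` -/
def w2sq : ℝ := ∑ j, ∑ k, (P.W2 j k) ^ 2

/-- `‖W₁(:,i)‖₂²` -/
def w1colSq (i : Fin d) : ℝ := ∑ j, (P.W1 j i) ^ 2

/-- the `n`-th entry of the LySep residual
`K^e*(W₃σ(a₂)+b₃𝟙ᵀ) + Σ_i K^e_i*(W₃(σ'(a₂)*d_{2i})) + K̂^e*Σ_i W₃(σ''(a₂)*d_{2i}*d_{2i}+σ'(a₂)*q_i) − Y` -/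
def sRes (n : Fin N) : ℝ :=
  P.Ke n * ((∑ j, P.W3 j * P.σ (A.a2 j n)) + P.b3)
    + (∑ i, P.Ki i n * ∑ j, P.W3 j * (P.σ' (A.a2 j n) * A.d2 i j n))
    + P.Khat n *
        ∑ i, ∑ j, P.W3 j * (P.σ'' (A.a2 j n) * A.d2 i j n * A.d2 i j n + P.σ' (A.a2 j n) * A.q i j n)
    - P.Y n

/-- constraint residual `W₁X + b₁𝟙ᵀ − a₁` -/
def Ra1 : Fin M → Fin N → ℝ := fun j n => (∑ i, P.W1 j i * P.X i n) + P.b1 j - A.a1 j n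

/-- constraint residual `W₂σ(a₁) + b₂𝟙ᵀ − a₂` -/
def Ra2 : Fin M → Fin N → ℝ := fun j n => (∑ k, P.W2 j k * P.σ (A.a1 k n)) + P.b2 j - A.a2 j n

/-- constraint residual `W₁(:,i)𝟙ᵀ − d_{1i}` -/
def Rd1 (i : Fin d) : Fin M → Fin N → ℝ := fun j n => P.W1 j i - A.d1 i j n

/-- constraint residual `W₂(σ'(a₁)*d_{1i}) − d_{2i}` -/
def Rd2 (i : Fin d) : Fin M → Fin N → ℝ :=
  fun j n => (∑ k, P.W2 j k * (P.σ' (A.a1 k n) * A.d1 i k n)) - A.d2 i j n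

/-- constraint residual `W₂(σ''(a₁)*d_{1i}*d_{1i}) − q_i` -/
def Rq (i : Fin d) : Fin M → Fin N → ℝ :=
  fun j n => (∑ k, P.W2 j k * (P.σ'' (A.a1 k n) * A.d1 i k n * A.d1 i k n)) - A.q i j n

/-- `D_{a₂}¹(n,n)²` -/
def Da2_1sq (n : Fin N) : ℝ :=
  nsup P.Ke ^ 2 + ∑ i, (nsup (P.Ki i) ^ 2 * colSq (A.d2 i) n + nsup P.Khat ^ 2 * colSq (A.q i) n)

/-- `D_{a₂}^{2i}(n,n)²` -/
def Da2_2sq (i : Fin d) (n : Fin N) : ℝ := nsup P.Khat ^ 2 * colSq (A.d2 i) n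

/-- `D_{a₁}^{2i}(n,n)²` -/
def Da1_2sq (i : Fin d) (n : Fin N) : ℝ := nsup P.Khat ^ 2 * colSq (A.d1 i) n

/-- `D_{a₁}^{3i}(n,n)²` -/
def Da1_3sq (i : Fin d) (n : Fin N) : ℝ := P.Da1_2sq A i n + P.Da2_2sq A i n

/-- `D_{a₁}¹(n,n)²` -/
def Da1_1sq (n : Fin N) : ℝ :=
  P.Da2_1sq A n + ∑ i, (nsup (P.Ki i) ^ 2 * colSq (A.d1 i) n + P.Da1_2sq A i n * colSq (A.d2 i) n)

/-- `D_{d_{1i}}²(n,n)²` -/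
def Dd1_2sq (i : Fin d) (n : Fin N) : ℝ := nsup (P.Ki i) ^ 2 + P.Da1_3sq A i n

/-- `D_{d_{2i}}¹(n,n)²` -/
def Dd2_1sq (i : Fin d) (n : Fin N) : ℝ := nsup (P.Ki i) ^ 2 + P.Da2_2sq A i n

/-- the LySep loss `J^e_S` with self-adaptive weights `ω` and diagonal matrices `D`:
`ω_{a₁}¹ = ω_{d_{1i}}² = ‖W₃‖²‖W₂‖²`, `ω_{a₁}^{2i} = ω_{a₂}^{2i} = ω_{a₁}¹‖W₁(:,i)‖²`,
`ω_{a₁}^{3i} = ω_{a₁}^{2i}‖W₂‖²`, `ω_{a₂}¹ = ω_{d_{2i}}¹ = ‖W₃‖²`,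
`ω_{d_{1i}}¹ = |K̂^e|_∞²(ω_{a₁}^{2i}+ω_{a₁}^{3i})`, `ω_{d_{2i}}² = |K̂^e|_∞²ω_{a₁}^{2i}`,
`ω_{q_i} = |K̂^e|_∞²ω_{a₂}¹`, `D_{d_{1i}}¹ = D_{d_{2i}}² = I`. -/
def JeS : ℝ :=
  (1 / (N : ℝ)) *
    ((∑ n, (P.sRes A n) ^ 2)
      + P.w3sq * P.w2sq * wSq (P.Da1_1sq A) (P.Ra1 A)
      + (∑ i, P.w3sq * P.w2sq * P.w1colSq i * wSq (P.Da1_2sq A i) (P.Ra1 A))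
      + (∑ i, P.w3sq * P.w2sq * P.w1colSq i * P.w2sq * wSq (P.Da1_3sq A i) (P.Ra1 A))
      + P.w3sq * wSq (P.Da2_1sq A) (P.Ra2 A)
      + (∑ i, P.w3sq * P.w2sq * P.w1colSq i * wSq (P.Da2_2sq A i) (P.Ra2 A))
      + (∑ i, nsup P.Khat ^ 2 *
          (P.w3sq * P.w2sq * P.w1colSq i + P.w3sq * P.w2sq * P.w1colSq i * P.w2sq) *
          froSq (P.Rd1 A i))
      + (∑ i, P.w3sq * P.w2sq * wSq (P.Dd1_2sq A i) (P.Rd1 A i))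
      + (∑ i, P.w3sq * wSq (P.Dd2_1sq A i) (P.Rd2 A i))
      + (∑ i, nsup P.Khat ^ 2 * (P.w3sq * P.w2sq * P.w1colSq i) * froSq (P.Rd2 A i))
      + (∑ i, nsup P.Khat ^ 2 * P.w3sq * froSq (P.Rq A i)))

/-- canonical auxiliary variable `a₁ = W₁X + b₁𝟙ᵀ` -/
def cA1 : Fin M → Fin N → ℝ := fun j n => (∑ i, P.W1 j i * P.X i n) + P.b1 j

/-- canonical auxiliary variable `a₂ = W₂σ(a₁) + b₂𝟙ᵀ` -/
def cA2 : Fin M → Fin N → ℝ := fun j n => (∑ k, P.W2 j k * P.σ (P.cA1 k n)) + P.b2 j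

/-- canonical auxiliary variable `d_{1i} = W₁(:,i)𝟙ᵀ` -/
def cD1 (i : Fin d) : Fin M → Fin N → ℝ := fun j _ => P.W1 j i

/-- canonical auxiliary variable `d_{2i} = W₂(σ'(a₁)*d_{1i})` -/
def cD2 (i : Fin d) : Fin M → Fin N → ℝ :=
  fun j n => ∑ k, P.W2 j k * (P.σ' (P.cA1 k n) * P.W1 k i)

/-- canonical auxiliary variable `q_i = W₂(σ''(a₁)*d_{1i}*d_{1i})` -/
def cQ (i : Fin d) : Fin M → Fin N → ℝ :=
  fun j n => ∑ k, P.W2 j k * (P.σ'' (P.cA1 k n) * P.W1 k i * P.W1 k i)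

/-- the canonical auxiliary variables -/
def canonAux : EllAux d M N := ⟨P.cA1, P.cA2, P.cD1, P.cD2, P.cQ⟩

end EllData

def HasDerivTwice (f f' f'' : ℝ → ℝ) : Prop :=
  ∀ t, HasDerivAt f (f' t) t ∧ HasDerivAt f' (f'' t) t

namespace HasDerivTwice

variable {f f' f'' g g' g'' : ℝ → ℝ}

lemma congr (hf : HasDerivTwice f f' f'') (h' : ∀ t, f' t = g' t) (h'' : ∀ t, f'' t = g'' t) :
    HasDerivTwice f g' g'' := by
  obtain rfl := funext h'
  obtain rfl := funext h''
  exact hf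

lemma add_const (hf : HasDerivTwice f f' f'') (a : ℝ) :
    HasDerivTwice (fun t => f t + a) f' f'' :=
  fun t => ⟨(hf t).1.add_const a, (hf t).2⟩

lemma sub_const (hf : HasDerivTwice f f' f'') (a : ℝ) :
    HasDerivTwice (fun t => f t - a) f' f'' :=
  fun t => ⟨(hf t).1.sub_const a, (hf t).2⟩

lemma const_mul (hf : HasDerivTwice f f' f'') (a : ℝ) :
    HasDerivTwice (fun t => a * f t) (fun t => a * f' t) (fun t => a * f'' t) :=
  fun t => ⟨(hf t).1.const_mul a, (hf t).2.const_mul a⟩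

lemma sum {ι : Type*} (s : Finset ι) {F F' F'' : ι → ℝ → ℝ}
    (hF : ∀ k ∈ s, HasDerivTwice (F k) (F' k) (F'' k)) :
    HasDerivTwice (fun t => ∑ k ∈ s, F k t) (fun t => ∑ k ∈ s, F' k t)
      (fun t => ∑ k ∈ s, F'' k t) :=
  fun t => ⟨HasDerivAt.fun_sum fun k hk => (hF k hk t).1,
    HasDerivAt.fun_sum fun k hk => (hF k hk t).2⟩

lemma mul (hf : HasDerivTwice f f' f'') (hg : HasDerivTwice g g' g'') :
    HasDerivTwice (fun t => f t * g t) (fun t => f' t * g t + f t * g' t)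
      (fun t => f'' t * g t + 2 * (f' t * g' t) + f t * g'' t) := fun t =>
  ⟨(hf t).1.mul (hg t).1,
    (((hf t).2.mul (hg t).1).add ((hf t).1.mul (hg t).2)).congr_deriv (by ring)⟩

lemma comp {σ : ℝ → ℝ} (hσ : ContDiff ℝ 2 σ) (hf : HasDerivTwice f f' f'') :
    HasDerivTwice (fun t => σ (f t)) (fun t => deriv σ (f t) * f' t)
      (fun t => deriv (deriv σ) (f t) * f' t * f' t + deriv σ (f t) * f'' t) := by
  have hσ1 : Differentiable ℝ σ := hσ.differentiable (by norm_num)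
  have hσ2 : Differentiable ℝ (deriv σ) :=
    (hσ.iterate_deriv' 1 1).differentiable one_ne_zero
  exact fun t => ⟨(hσ1 (f t)).hasDerivAt.comp t (hf t).1,
    (((hσ2 (f t)).hasDerivAt.comp t (hf t).1).mul (hf t).2).congr_deriv
      (by rw [Function.comp_apply])⟩

end HasDerivTwice

section PartialDeriv

variable {d : ℕ} {f c : (Fin d → ℝ) → ℝ} {y : Fin d → ℝ} {i : Fin d}

open Function

lemma hasDerivAt_update_pd {t : ℝ} (hf : DifferentiableAt ℝ f (update y i t)) :
    HasDerivAt (fun s => f (update y i s)) (pd f i (update y i t)) t :=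
  hf.hasFDerivAt.comp_hasDerivAt t (hasDerivAt_update y i t)

lemma ContDiff.differentiable_pd (hf : ContDiff ℝ 2 f) (i : Fin d) :
    Differentiable ℝ (pd f i) :=
  ((hf.fderiv_right (m := 1) (by norm_num)).clm_apply contDiff_const).differentiable
    one_ne_zero

lemma hasDerivTwice_update_apply (y : Fin d → ℝ) (i i' : Fin d) :
    HasDerivTwice (fun s => update y i s i') (fun _ => (Pi.single i 1 : Fin d → ℝ) i')
      (fun _ => 0) :=
  fun t => ⟨hasDerivAt_pi.1 (hasDerivAt_update y i t) i', hasDerivAt_const _ _⟩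

lemma pd_mul_pd_eq (hf : ContDiff ℝ 2 f) (hc : ContDiff ℝ 1 c) {g' g'' : ℝ → ℝ}
    (hg : HasDerivTwice (fun s => f (update y i s)) g' g'') :
    pd (fun z => c z * pd f i z) i y = pd c i y * g' (y i) + c y * g'' (y i) := by
  have hpd : ∀ s, pd f i (update y i s) = g' s := fun s =>
    (hasDerivAt_update_pd ((hf.differentiable (by norm_num)) _)).unique (hg s).1
  have hcd := (hc.differentiable one_ne_zero).differentiableAt (x := y)
  have hlhs := hasDerivAt_update_pd (f := fun z => c z * pd f i z) (y := y) (i := i) (t := y i)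
    (by rw [update_eq_self]; exact hcd.mul ((hf.differentiable_pd i) y))
  have hrhs := (hasDerivAt_update_pd (f := c) (y := y) (i := i) (t := y i)
    (by rwa [update_eq_self])).fun_mul (hg (y i)).2
  simp only [update_eq_self, hpd] at hlhs hrhs
  exact hlhs.unique hrhs

end PartialDeriv

lemma hasDerivTwice_neuron {σ : ℝ → ℝ} (hσ : ContDiff ℝ 2 σ) {ι : Type*} [Fintype ι]
    (w : ι → ℝ) (b : ℝ) {u u' u'' : ι → ℝ → ℝ} (hu : ∀ k, HasDerivTwice (u k) (u' k) (u'' k)) :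
    HasDerivTwice (fun t => (∑ k, w k * σ (u k t)) + b)
      (fun t => ∑ k, w k * (deriv σ (u k t) * u' k t))
      (fun t => ∑ k, w k * (deriv (deriv σ) (u k t) * u' k t * u' k t
        + deriv σ (u k t) * u'' k t)) :=
  (HasDerivTwice.sum _ fun k _ => ((hu k).comp hσ).const_mul (w k)).add_const b

section LineRestriction

open Function

variable {d : ℕ} (y : Fin d → ℝ) (i : Fin d)

lemma hasDerivTwice_sum_mul_update (w : Fin d → ℝ) :
    HasDerivTwice (fun s => ∑ i', w i' * update y i s i') (fun _ => w i) (fun _ => 0) :=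
  (HasDerivTwice.sum _ fun i' _ => (hasDerivTwice_update_apply y i i').const_mul (w i')).congr
    (fun _ => by simp [Pi.single_apply]) (fun _ => by simp)

lemma hasDerivTwice_sum_sq_update :
    HasDerivTwice (fun s => ∑ i', update y i s i' ^ 2) (fun s => 2 * s) (fun _ => 2) := by
  simp only [sq]
  exact (HasDerivTwice.sum _ fun i' _ =>
    (hasDerivTwice_update_apply y i i').mul (hasDerivTwice_update_apply y i i')).congr
    (fun _ => by simp [Pi.single_apply, ite_add_ite]; ring) (fun _ => by simp [Pi.single_apply])

end LineRestriction

namespace EllData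

open Function

variable {d M N : ℕ} (P : EllData d M N)

-- At `y = P.x n` these are, definitionally, `cA1`, `cA2`, `cD2` and `cQ`.
def preact1 (k : Fin M) (y : Fin d → ℝ) : ℝ := (∑ i, P.W1 k i * y i) + P.b1 k

def preact2 (j : Fin M) (y : Fin d → ℝ) : ℝ := (∑ k, P.W2 j k * P.σ (P.preact1 k y)) + P.b2 j

def pdPreact2 (i : Fin d) (j : Fin M) (y : Fin d → ℝ) : ℝ :=
  ∑ k, P.W2 j k * (P.σ' (P.preact1 k y) * P.W1 k i)

def pdPdPreact2 (i : Fin d) (j : Fin M) (y : Fin d → ℝ) : ℝ :=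
  ∑ k, P.W2 j k * (P.σ'' (P.preact1 k y) * P.W1 k i * P.W1 k i)

def pdPhi (i : Fin d) (y : Fin d → ℝ) : ℝ :=
  ∑ j, P.W3 j * (P.σ' (P.preact2 j y) * P.pdPreact2 i j y)

def pdPdPhi (i : Fin d) (y : Fin d → ℝ) : ℝ :=
  ∑ j, P.W3 j * (P.σ'' (P.preact2 j y) * P.pdPreact2 i j y * P.pdPreact2 i j y
    + P.σ' (P.preact2 j y) * P.pdPdPreact2 i j y)

section Directional

variable {P} (hσ : ContDiff ℝ 2 P.σ) (y : Fin d → ℝ) (i : Fin d)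
include hσ

lemma hasDerivTwice_preact2_update (j : Fin M) :
    HasDerivTwice (fun s => P.preact2 j (update y i s)) (fun s => P.pdPreact2 i j (update y i s))
      (fun s => P.pdPdPreact2 i j (update y i s)) :=
  (hasDerivTwice_neuron hσ (P.W2 j) (P.b2 j)
    fun k => (hasDerivTwice_sum_mul_update y i (P.W1 k)).add_const (P.b1 k)).congr
    (fun _ => rfl) (fun _ => by simp only [mul_zero, add_zero]; rfl)

lemma hasDerivTwice_phi_update :
    HasDerivTwice (fun s => P.phi (update y i s)) (fun s => P.pdPhi i (update y i s))
      (fun s => P.pdPdPhi i (update y i s)) :=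
  hasDerivTwice_neuron hσ P.W3 P.b3 fun j => hasDerivTwice_preact2_update hσ y i j

lemma hasDerivTwice_psiE_update :
    HasDerivTwice (fun s => P.psiE (update y i s))
      (fun s => 2 * s * P.phi (update y i s)
        + ((∑ i', update y i s i' ^ 2) - 1) * P.pdPhi i (update y i s))
      (fun s => 2 * P.phi (update y i s) + 4 * s * P.pdPhi i (update y i s)
        + ((∑ i', update y i s i' ^ 2) - 1) * P.pdPdPhi i (update y i s)) :=
  (((hasDerivTwice_sum_sq_update y i).sub_const 1).mul (hasDerivTwice_phi_update hσ y i)).congr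
    (fun _ => rfl) (fun _ => by ring)

lemma contDiff_psiE : ContDiff ℝ 2 P.psiE := by
  unfold psiE phi
  fun_prop

lemma pd_c_mul_pd_psiE (hc : ContDiff ℝ 1 P.c) :
    pd (fun z => P.c z * pd P.psiE i z) i y
      = pd P.c i y * (2 * y i * P.phi y + ((∑ i', y i' ^ 2) - 1) * P.pdPhi i y)
        + P.c y * (2 * P.phi y + 4 * y i * P.pdPhi i y
          + ((∑ i', y i' ^ 2) - 1) * P.pdPdPhi i y) := by
  rw [pd_mul_pd_eq (contDiff_psiE hσ) hc (hasDerivTwice_psiE_update hσ y i)]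
  simp only [update_eq_self]

end Directional

variable {P}

lemma pinnRes_eq (hσ : ContDiff ℝ 2 P.σ) (hc : ContDiff ℝ 1 P.c) (n : Fin N) :
    P.pinnRes n = (∑ i, (P.dcX i n * (2 * P.X i n * P.phi (P.x n)
        + (P.Xhat n - 1) * P.pdPhi i (P.x n))
      + P.cX n * (2 * P.phi (P.x n) + 4 * P.X i n * P.pdPhi i (P.x n)
        + (P.Xhat n - 1) * P.pdPdPhi i (P.x n)))) - P.Y n := by
  simp only [pinnRes, pd_c_mul_pd_psiE hσ _ _ hc]
  rfl

lemma sRes_canonAux_eq_pinnRes (hσ : ContDiff ℝ 2 P.σ) (hc : ContDiff ℝ 1 P.c) (n : Fin N) :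
    P.sRes P.canonAux n = P.pinnRes n := by
  change P.Ke n * P.phi (P.x n) + (∑ i, P.Ki i n * P.pdPhi i (P.x n))
    + P.Khat n * (∑ i, P.pdPdPhi i (P.x n)) - P.Y n = _
  rw [pinnRes_eq hσ hc, sub_left_inj]
  have hdc : (d : ℝ) * P.cX n = ∑ _i : Fin d, P.cX n := by simp
  simp only [Ke, Ki, Khat]
  rw [hdc, ← Finset.sum_add_distrib, Finset.mul_sum, Finset.sum_mul, Finset.mul_sum,
    ← Finset.sum_add_distrib, ← Finset.sum_add_distrib]
  exact Finset.sum_congr rfl fun i _ => by ring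

variable (P)

lemma JeS_canonAux : P.JeS P.canonAux = (1 / (N : ℝ)) * ∑ n, (P.sRes P.canonAux n) ^ 2 := by
  simp [JeS, Ra1, Ra2, Rd1, Rd2, Rq, canonAux, cA1, cA2, cD1, cD2, cQ, wSq, froSq, colSq]

end EllData

theorem elliptic_lysep_aux_exists_general
    {d M N : ℕ}
    (P : EllData d M N)
    (hσ : ContDiff ℝ 2 P.σ) (hc : ContDiff ℝ 1 P.c) :
    ∃ A : EllAux d M N, P.JeS A ≤ P.Je := by
  refine ⟨P.canonAux, le_of_eq ?_⟩
  rw [P.JeS_canonAux, EllData.Je]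
  simp only [EllData.sRes_canonAux_eq_pinnRes hσ hc]

/-- **Theorem 2.2** (existence of auxiliary variables dominating the elliptic PINN loss).
For all network parameters `{W_l, b_l}`, there exist auxiliary variables
`a₁, a₂, {d_{1i}}, {d_{2i}}, {q_i}` such that `J^e_S ≤ J^e`. -/
theorem elliptic_lysep_aux_exists
    {d M N : ℕ} (hd : 0 < d) (hM : 0 < M) (hN : 0 < N)
    (P : EllData d M N)
    (hσ : ContDiff ℝ 2 P.σ) (hc : ContDiff ℝ 1 P.c) :
    ∃ A : EllAux d M N, P.JeS A ≤ P.Je :=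
  elliptic_lysep_aux_exists_general P hσ hc
end
end

section
/- Columnwise bound on the first-derivative output mismatch (inequality (A.6)). Suppose |σ(z₁)−σ(z₂)| ≤ C_σ|z₁−z₂|, |σ'(z)| ≤ B_{σ'}, and |σ'(z₁)−σ'(z₂)| ≤ C_{σ'}|z₁−z₂| for all z,z₁,z₂ ∈ ℝ. Define, for i ∈ {1,…,d} and n ∈ {1,…,N}, z_n = W₂σ(W₁x_n+b₁)+b₂, s_{n,i} = W₂(σ'(W₁x_n+b₁)*W₁(:,i)), and T_{2i}[n] = σ'(z_n)*s_{n,i} − σ'(a₂[n])*d_{2i}[n]. Then ‖T_{2i}[n]‖₂ ≤ C₁( ‖W₂‖_F‖W₁(:,i)−d_{1i}[n]‖₂ + ‖W₂(σ'(a₁[n])*d_{1i}[n])−d_{2i}[n]‖₂ + ‖W₂‖_F(‖d_{1i}[n]‖₂+‖d_{2i}[n]‖₂)‖W₁x_n+b₁−a₁[n]‖₂ + ‖d_{2i}[n]‖₂‖W₂σ(a₁[n])+b₂−a₂[n]‖₂ ), where C₁ = max{B_{σ'}·max{1,B_{σ'}}, C_{σ'}·max{1,B_{σ'},C_σ}}.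 -/
open scoped BigOperators

noncomputable section

/-- Euclidean norm of a vector in `ℝ^M`. -/
def vecEnorm {M : ℕ} (v : Fin M → ℝ) : ℝ := Real.sqrt (∑ j, (v j) ^ 2)

/-- Frobenius norm of an `M × M` matrix. -/
def froW {M : ℕ} (W : Fin M → Fin M → ℝ) : ℝ := Real.sqrt (∑ j, ∑ k, (W j k) ^ 2)

/-- `z_n = W₂σ(W₁x_n+b₁)+b₂` -/
def Zn {d M : ℕ} (σ : ℝ → ℝ) (W1 : Fin M → Fin d → ℝ) (b1 : Fin M → ℝ)
    (W2 : Fin M → Fin M → ℝ) (b2 : Fin M → ℝ) (xn : Fin d → ℝ) : Fin M → ℝ :=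
  fun j => (∑ k, W2 j k * σ ((∑ i', W1 k i' * xn i') + b1 k)) + b2 j

/-- `s_{n,i} = W₂(σ'(W₁x_n+b₁)*W₁(:,i))` -/
def Sni {d M : ℕ} (σ : ℝ → ℝ) (W1 : Fin M → Fin d → ℝ) (b1 : Fin M → ℝ)
    (W2 : Fin M → Fin M → ℝ) (xn : Fin d → ℝ) (i : Fin d) : Fin M → ℝ :=
  fun j => ∑ k, W2 j k * (deriv σ ((∑ i', W1 k i' * xn i') + b1 k) * W1 k i)

/-- `T_{2i}[n] = σ'(z_n)*s_{n,i} − σ'(a₂[n])*d_{2i}[n]` -/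
def T2col {d M N : ℕ} (σ : ℝ → ℝ) (W1 : Fin M → Fin d → ℝ) (b1 : Fin M → ℝ)
    (W2 : Fin M → Fin M → ℝ) (b2 : Fin M → ℝ) (xn : Fin d → ℝ)
    (a2 : Fin M → Fin N → ℝ) (d2 : Fin d → Fin M → Fin N → ℝ)
    (i : Fin d) (n : Fin N) : Fin M → ℝ :=
  fun j => deriv σ (Zn σ W1 b1 W2 b2 xn j) * Sni σ W1 b1 W2 xn i j
    - deriv σ (a2 j n) * d2 i j n

/-! Write `z = W₂σ(u) + b₂` with `u = W₁x + b₁`, and split the mismatch as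
`σ'(z)*W₂(σ'(u)*(w - d₁)) + σ'(z)*W₂((σ'(u) - σ'(a₁))*d₁) + σ'(z)*(W₂(σ'(a₁)*d₁) - d₂)
  + (σ'(z) - σ'(a₂))*d₂`.
Each term is bounded by `‖σ'‖_∞ ≤ B_{σ'}`, the Lipschitz constants, `‖W₂v‖ ≤ ‖W₂‖_F‖v‖` and
`‖v*w‖ ≤ ‖v‖‖w‖`; the last term also uses `z - a₂ = W₂(σ(u) - σ(a₁)) + (W₂σ(a₁) + b₂ - a₂)`.
All resulting coefficients are at most `C₁`. -/

open Finset Matrix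

section VecEnorm

variable {M : ℕ}

lemma vecEnorm_nonneg (v : Fin M → ℝ) : 0 ≤ vecEnorm v := Real.sqrt_nonneg _

lemma froW_nonneg (W : Matrix (Fin M) (Fin M) ℝ) : 0 ≤ froW W := Real.sqrt_nonneg _

lemma vecEnorm_eq_norm (v : Fin M → ℝ) : vecEnorm v = ‖WithLp.toLp 2 v‖ := by
  simp [EuclideanSpace.norm_eq, vecEnorm]

lemma vecEnorm_add_le (v w : Fin M → ℝ) : vecEnorm (v + w) ≤ vecEnorm v + vecEnorm w := by
  simpa only [vecEnorm_eq_norm, WithLp.toLp_add] using norm_add_le _ _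

lemma vecEnorm_smul (c : ℝ) (v : Fin M → ℝ) : vecEnorm (c • v) = |c| * vecEnorm v := by
  rw [vecEnorm_eq_norm, vecEnorm_eq_norm, WithLp.toLp_smul, norm_smul, Real.norm_eq_abs]

lemma vecEnorm_le_of_abs_le {v w : Fin M → ℝ} (h : ∀ j, |v j| ≤ |w j|) :
    vecEnorm v ≤ vecEnorm w :=
  Real.sqrt_le_sqrt <| sum_le_sum fun j _ => sq_le_sq.2 (h j)

lemma vecEnorm_mul_le (v w : Fin M → ℝ) : vecEnorm (v * w) ≤ vecEnorm v * vecEnorm w := by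
  rw [vecEnorm, vecEnorm, vecEnorm, ← Real.sqrt_mul (sum_nonneg fun j _ => sq_nonneg _), sum_mul]
  refine Real.sqrt_le_sqrt <| sum_le_sum fun j _ => ?_
  rw [Pi.mul_apply, mul_pow]
  exact mul_le_mul_of_nonneg_left (single_le_sum (fun k _ => sq_nonneg (w k)) (mem_univ j))
    (sq_nonneg _)

lemma vecEnorm_mulVec_le (W : Matrix (Fin M) (Fin M) ℝ) (v : Fin M → ℝ) :
    vecEnorm (W *ᵥ v) ≤ froW W * vecEnorm v := by
  unfold vecEnorm froW
  refine le_of_le_of_eq ?_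
    (Real.sqrt_mul (sum_nonneg fun j _ => sum_nonneg fun k _ => sq_nonneg _) _)
  rw [sum_mul]
  exact Real.sqrt_le_sqrt <| sum_le_sum fun j _ => sum_mul_sq_le_sq_mul_sq univ (W j) v

lemma vecEnorm_comp_mul_le {f : ℝ → ℝ} {B : ℝ} (hf : ∀ x, |f x| ≤ B) (z v : Fin M → ℝ) :
    vecEnorm (f ∘ z * v) ≤ B * vecEnorm v := by
  have hB : 0 ≤ B := (abs_nonneg _).trans (hf 0)
  calc vecEnorm (f ∘ z * v) ≤ vecEnorm (B • v) := vecEnorm_le_of_abs_le fun j => by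
        simp only [Pi.mul_apply, Pi.smul_apply, Function.comp_apply, smul_eq_mul, abs_mul,
          abs_of_nonneg hB]
        exact mul_le_mul_of_nonneg_right (hf _) (abs_nonneg _)
    _ = B * vecEnorm v := by rw [vecEnorm_smul, abs_of_nonneg hB]

lemma nonneg_of_abs_sub_le_mul {f : ℝ → ℝ} {C : ℝ} (hf : ∀ x y, |f x - f y| ≤ C * |x - y|) :
    0 ≤ C := by
  simpa using (abs_nonneg _).trans (hf 1 0)

lemma vecEnorm_comp_sub_comp_le {f : ℝ → ℝ} {C : ℝ} (hf : ∀ x y, |f x - f y| ≤ C * |x - y|)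
    (u v : Fin M → ℝ) : vecEnorm (f ∘ u - f ∘ v) ≤ C * vecEnorm (u - v) := by
  have hC := nonneg_of_abs_sub_le_mul hf
  calc vecEnorm (f ∘ u - f ∘ v) ≤ vecEnorm (C • (u - v)) := vecEnorm_le_of_abs_le fun j => by
        simpa only [Pi.sub_apply, Pi.smul_apply, Function.comp_apply, smul_eq_mul, abs_mul,
          abs_of_nonneg hC] using hf _ _
    _ = C * vecEnorm (u - v) := by rw [vecEnorm_smul, abs_of_nonneg hC]

end VecEnorm

lemma constC1_bounds {Cσ Cσ' Bσ' : ℝ} (hB : 0 ≤ Bσ') (hC' : 0 ≤ Cσ') :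
    Bσ' * Bσ' ≤ constC1 Cσ Cσ' Bσ' ∧ Bσ' * Cσ' ≤ constC1 Cσ Cσ' Bσ' ∧ Bσ' ≤ constC1 Cσ Cσ' Bσ'
      ∧ Cσ' * Cσ ≤ constC1 Cσ Cσ' Bσ' ∧ Cσ' ≤ constC1 Cσ Cσ' Bσ' := by
  have hB1 : Bσ' ≤ max (max 1 Bσ') Cσ := le_max_of_le_left (le_max_right _ _)
  have h1 : 1 ≤ max (max 1 Bσ') Cσ := le_max_of_le_left (le_max_left _ _)
  refine ⟨le_max_of_le_left ?_, le_max_of_le_right ?_, le_max_of_le_left ?_,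
    le_max_of_le_right ?_, le_max_of_le_right ?_⟩
  · exact mul_le_mul_of_nonneg_left (le_max_right _ _) hB
  · rw [mul_comm]; exact mul_le_mul_of_nonneg_left hB1 hC'
  · exact le_mul_of_one_le_right hB (le_max_left _ _)
  · exact mul_le_mul_of_nonneg_left (le_max_right _ _) hC'
  · exact le_mul_of_one_le_right hC' h1

section Network

variable {M : ℕ} (σ σ' : ℝ → ℝ) (W : Matrix (Fin M) (Fin M) ℝ)
  (b u a₁ a₂ w d₁ d₂ : Fin M → ℝ)

lemma output_sub_eq :
    W *ᵥ σ ∘ u + b - a₂ = W *ᵥ (σ ∘ u - σ ∘ a₁) + (W *ᵥ σ ∘ a₁ + b - a₂) := by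
  rw [mulVec_sub]; abel

lemma outputMismatch_eq (z : Fin M → ℝ) :
    σ' ∘ z * W *ᵥ (σ' ∘ u * w) - σ' ∘ a₂ * d₂ =
      σ' ∘ z * (W *ᵥ (σ' ∘ u * (w - d₁)) + W *ᵥ ((σ' ∘ u - σ' ∘ a₁) * d₁)
        + (W *ᵥ (σ' ∘ a₁ * d₁) - d₂)) + (σ' ∘ z - σ' ∘ a₂) * d₂ := by
  have hsplit : σ' ∘ u * w = σ' ∘ u * (w - d₁) + (σ' ∘ u - σ' ∘ a₁) * d₁ + σ' ∘ a₁ * d₁ := by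
    ring
  rw [hsplit, mulVec_add, mulVec_add]
  ring

variable {σ σ'} {Cσ Cσ' Bσ' : ℝ}

lemma vecEnorm_output_sub_le (hσ : ∀ x y, |σ x - σ y| ≤ Cσ * |x - y|) :
    vecEnorm (W *ᵥ σ ∘ u + b - a₂)
      ≤ froW W * (Cσ * vecEnorm (u - a₁)) + vecEnorm (W *ᵥ σ ∘ a₁ + b - a₂) := by
  rw [output_sub_eq σ W b u a₁ a₂]
  refine (vecEnorm_add_le _ _).trans (add_le_add_left ?_ _)
  exact (vecEnorm_mulVec_le _ _).trans
    (mul_le_mul_of_nonneg_left (vecEnorm_comp_sub_comp_le hσ u a₁) (froW_nonneg W))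

lemma vecEnorm_outputMismatch_le (hσ : ∀ x y, |σ x - σ y| ≤ Cσ * |x - y|)
    (hσ'_bdd : ∀ x, |σ' x| ≤ Bσ') (hσ' : ∀ x y, |σ' x - σ' y| ≤ Cσ' * |x - y|) :
    vecEnorm (σ' ∘ (W *ᵥ σ ∘ u + b) * W *ᵥ (σ' ∘ u * w) - σ' ∘ a₂ * d₂)
      ≤ Bσ' * (froW W * (Bσ' * vecEnorm (w - d₁))
          + froW W * (Cσ' * vecEnorm (u - a₁) * vecEnorm d₁) + vecEnorm (W *ᵥ (σ' ∘ a₁ * d₁) - d₂))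
        + Cσ' * (froW W * (Cσ * vecEnorm (u - a₁)) + vecEnorm (W *ᵥ σ ∘ a₁ + b - a₂))
          * vecEnorm d₂ := by
  have hF := froW_nonneg W
  have hB : 0 ≤ Bσ' := (abs_nonneg _).trans (hσ'_bdd 0)
  have hC' := nonneg_of_abs_sub_le_mul hσ'
  have hd₁ := vecEnorm_nonneg d₁
  have hd₂ := vecEnorm_nonneg d₂
  have hidden : vecEnorm (W *ᵥ (σ' ∘ u * (w - d₁)) + W *ᵥ ((σ' ∘ u - σ' ∘ a₁) * d₁)
      + (W *ᵥ (σ' ∘ a₁ * d₁) - d₂)) ≤ froW W * (Bσ' * vecEnorm (w - d₁))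
        + froW W * (Cσ' * vecEnorm (u - a₁) * vecEnorm d₁)
        + vecEnorm (W *ᵥ (σ' ∘ a₁ * d₁) - d₂) := by
    refine (vecEnorm_add_le _ _).trans (add_le_add_left ((vecEnorm_add_le _ _).trans ?_) _)
    gcongr
    · exact (vecEnorm_mulVec_le _ _).trans (by gcongr; exact vecEnorm_comp_mul_le hσ'_bdd _ _)
    · refine (vecEnorm_mulVec_le _ _).trans ?_
      gcongr
      exact (vecEnorm_mul_le _ _).trans (by gcongr; exact vecEnorm_comp_sub_comp_le hσ' _ _)
  have output : vecEnorm ((σ' ∘ (W *ᵥ σ ∘ u + b) - σ' ∘ a₂) * d₂)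
      ≤ Cσ' * (froW W * (Cσ * vecEnorm (u - a₁)) + vecEnorm (W *ᵥ σ ∘ a₁ + b - a₂))
        * vecEnorm d₂ := by
    refine (vecEnorm_mul_le _ _).trans ?_
    gcongr
    exact (vecEnorm_comp_sub_comp_le hσ' _ _).trans
      (by gcongr; exact vecEnorm_output_sub_le W b u a₁ a₂ hσ)
  rw [outputMismatch_eq σ' W u a₁ a₂ w d₁ d₂]
  refine (vecEnorm_add_le _ _).trans (add_le_add ?_ output)
  exact (vecEnorm_comp_mul_le hσ'_bdd _ _).trans (by gcongr)

lemma vecEnorm_outputMismatch_le_constC1 (hσ : ∀ x y, |σ x - σ y| ≤ Cσ * |x - y|)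
    (hσ'_bdd : ∀ x, |σ' x| ≤ Bσ') (hσ' : ∀ x y, |σ' x - σ' y| ≤ Cσ' * |x - y|) :
    vecEnorm (σ' ∘ (W *ᵥ σ ∘ u + b) * W *ᵥ (σ' ∘ u * w) - σ' ∘ a₂ * d₂)
      ≤ constC1 Cσ Cσ' Bσ' * (froW W * vecEnorm (w - d₁) + vecEnorm (W *ᵥ (σ' ∘ a₁ * d₁) - d₂)
          + froW W * (vecEnorm d₁ + vecEnorm d₂) * vecEnorm (u - a₁)
          + vecEnorm d₂ * vecEnorm (W *ᵥ σ ∘ a₁ + b - a₂)) := by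
  refine (vecEnorm_outputMismatch_le W b u a₁ a₂ w d₁ d₂ hσ hσ'_bdd hσ').trans ?_
  have hB : 0 ≤ Bσ' := (abs_nonneg _).trans (hσ'_bdd 0)
  obtain ⟨hBB, hBC', hB', hC'C, hC'⟩ :=
    constC1_bounds (Cσ := Cσ) hB (nonneg_of_abs_sub_le_mul hσ')
  have hF := froW_nonneg W
  have hwd₁ := vecEnorm_nonneg (w - d₁)
  have hd₂' := vecEnorm_nonneg (W *ᵥ (σ' ∘ a₁ * d₁) - d₂)
  have hua₁ := vecEnorm_nonneg (u - a₁)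
  have hd₁ := vecEnorm_nonneg d₁
  have hd₂ := vecEnorm_nonneg d₂
  have ha₂ := vecEnorm_nonneg (W *ᵥ σ ∘ a₁ + b - a₂)
  calc _ = Bσ' * Bσ' * (froW W * vecEnorm (w - d₁))
        + Bσ' * Cσ' * (froW W * vecEnorm (u - a₁) * vecEnorm d₁)
        + Bσ' * vecEnorm (W *ᵥ (σ' ∘ a₁ * d₁) - d₂)
        + Cσ' * Cσ * (froW W * vecEnorm (u - a₁) * vecEnorm d₂)
        + Cσ' * (vecEnorm d₂ * vecEnorm (W *ᵥ σ ∘ a₁ + b - a₂)) := by ring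
    _ ≤ constC1 Cσ Cσ' Bσ' * (froW W * vecEnorm (w - d₁))
        + constC1 Cσ Cσ' Bσ' * (froW W * vecEnorm (u - a₁) * vecEnorm d₁)
        + constC1 Cσ Cσ' Bσ' * vecEnorm (W *ᵥ (σ' ∘ a₁ * d₁) - d₂)
        + constC1 Cσ Cσ' Bσ' * (froW W * vecEnorm (u - a₁) * vecEnorm d₂)
        + constC1 Cσ Cσ' Bσ' * (vecEnorm d₂ * vecEnorm (W *ᵥ σ ∘ a₁ + b - a₂)) := by gcongr
    _ = _ := by ring

end Network

theorem first_derivative_output_mismatch_columnwise_bound_general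
    {d M N : ℕ}
    (σ : ℝ → ℝ) (Cσ Cσ' Bσ' : ℝ)
    (hLσ : ∀ z₁ z₂ : ℝ, |σ z₁ - σ z₂| ≤ Cσ * |z₁ - z₂|)
    (hbσ' : ∀ z : ℝ, |deriv σ z| ≤ Bσ')
    (hLσ' : ∀ z₁ z₂ : ℝ, |deriv σ z₁ - deriv σ z₂| ≤ Cσ' * |z₁ - z₂|)
    (W1 : Fin M → Fin d → ℝ) (b1 : Fin M → ℝ)
    (W2 : Fin M → Fin M → ℝ) (b2 : Fin M → ℝ)
    (xn : Fin d → ℝ)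
    (a1 a2 : Fin M → Fin N → ℝ)
    (d1 d2 : Fin d → Fin M → Fin N → ℝ)
    (i : Fin d) (n : Fin N) :
    vecEnorm (T2col σ W1 b1 W2 b2 xn a2 d2 i n)
      ≤ constC1 Cσ Cσ' Bσ' *
          (froW W2 * vecEnorm (fun k => W1 k i - d1 i k n)
            + vecEnorm (fun j => (∑ k, W2 j k * (deriv σ (a1 k n) * d1 i k n)) - d2 i j n)
            + froW W2 * (vecEnorm (fun k => d1 i k n) + vecEnorm (fun k => d2 i k n)) *
                vecEnorm (fun k => (∑ i', W1 k i' * xn i') + b1 k - a1 k n)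
            + vecEnorm (fun k => d2 i k n) *
                vecEnorm (fun j => (∑ k, W2 j k * σ (a1 k n)) + b2 j - a2 j n)) :=
  vecEnorm_outputMismatch_le_constC1 W2 b2 (W1 *ᵥ xn + b1) (a1 · n) (a2 · n) (W1 · i)
    (d1 i · n) (d2 i · n) hLσ hbσ' hLσ'

/-- **Inequality (A.6)** (columnwise bound on the first-derivative output mismatch). -/
theorem first_derivative_output_mismatch_columnwise_bound
    {d M N : ℕ} (hd : 0 < d) (hM : 0 < M) (hN : 0 < N)
    (σ : ℝ → ℝ) (Cσ Cσ' Bσ' : ℝ)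
    (hLσ : ∀ z₁ z₂ : ℝ, |σ z₁ - σ z₂| ≤ Cσ * |z₁ - z₂|)
    (hbσ' : ∀ z : ℝ, |deriv σ z| ≤ Bσ')
    (hLσ' : ∀ z₁ z₂ : ℝ, |deriv σ z₁ - deriv σ z₂| ≤ Cσ' * |z₁ - z₂|)
    (W1 : Fin M → Fin d → ℝ) (b1 : Fin M → ℝ)
    (W2 : Fin M → Fin M → ℝ) (b2 : Fin M → ℝ)
    (xn : Fin d → ℝ)
    (a1 a2 : Fin M → Fin N → ℝ)
    (d1 d2 : Fin d → Fin M → Fin N → ℝ)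
    (i : Fin d) (n : Fin N) :
    vecEnorm (T2col σ W1 b1 W2 b2 xn a2 d2 i n)
      ≤ constC1 Cσ Cσ' Bσ' *
          (froW W2 * vecEnorm (fun k => W1 k i - d1 i k n)
            + vecEnorm (fun j => (∑ k, W2 j k * (deriv σ (a1 k n) * d1 i k n)) - d2 i j n)
            + froW W2 * (vecEnorm (fun k => d1 i k n) + vecEnorm (fun k => d2 i k n)) *
                vecEnorm (fun k => (∑ i', W1 k i' * xn i') + b1 k - a1 k n)
            + vecEnorm (fun k => d2 i k n) *
                vecEnorm (fun j => (∑ k, W2 j k * σ (a1 k n)) + b2 j - a2 j n)) :=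
  first_derivative_output_mismatch_columnwise_bound_general σ Cσ Cσ' Bσ' hLσ hbσ' hLσ' W1 b1 W2 b2
    xn a1 a2 d1 d2 i n
end
end

section
/- Summed squared bound on the first-derivative output mismatch (inequality (A.7)). Under the hypotheses and notation of inequality (A.6), with T_{2i} ∈ ℝ^{M×N} the matrix whose n-th column is T_{2i}[n] = σ'(z_n)*s_{n,i} − σ'(a₂[n])*d_{2i}[n], one has for each i ∈ {1,…,d}: ‖T_{2i}‖_F² ≤ 5C₁² Σ_{n=1}^N [ ‖W₂‖_F²‖W₁(:,i)−d_{1i}[n]‖₂² + ‖W₂(σ'(a₁[n])*d_{1i}[n])−d_{2i}[n]‖₂² + ‖W₂‖_F²(‖d_{1i}[n]‖₂²+‖d_{2i}[n]‖₂²)‖W₁x_n+b₁−a₁[n]‖₂² + ‖d_{2i}[n]‖₂²‖W₂σ(a₁[n])+b₂−a₂[n]‖₂² ], where C₁ = max{B_{σ'}·max{1,B_{σ'}}, C_{σ'}·max{1,B_{σ'},C_σ}}. -/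
/-! Write `p = W₁xₙ + b₁`. Row by row,
`σ'(zₙ) sₙᵢ − σ'(a₂) d₂ = σ'(zₙ) W₂(σ'(p)(W₁(:,i) − d₁)) + σ'(zₙ) W₂((σ'(p) − σ'(a₁)) d₁)
  + σ'(zₙ)(W₂(σ'(a₁) d₁) − d₂) + (σ'(zₙ) − σ'(a₂)) d₂`,
and `zₙ − a₂ = W₂(σ(p) − σ(a₁)) + (W₂σ(a₁) + b₂ − a₂)`. Cauchy–Schwarz and the bounds on `σ`
and `σ'` bound each entry in absolute value by `C₁` times a sum of five products of norms;
`(r₁ + ⋯ + r₅)² ≤ 5 ∑ rₖ²` and summing over rows and then over `n` gives the estimate. -/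

open scoped BigOperators

noncomputable section

def enorm {M : ℕ} (v : Fin M → ℝ) : ℝ := Real.sqrt (∑ j, (v j) ^ 2)

def esq {M : ℕ} (v : Fin M → ℝ) : ℝ := ∑ j, (v j) ^ 2

local notation "‖" v "‖₂" => (enorm v : ℝ)

section Norms

variable {M : ℕ}

lemma esq_nonneg (v : Fin M → ℝ) : 0 ≤ esq v :=
  Finset.sum_nonneg fun _ _ => sq_nonneg _

lemma enorm_eq_sqrt_esq (v : Fin M → ℝ) : ‖v‖₂ = √(esq v) := rfl

lemma enorm_nonneg (v : Fin M → ℝ) : 0 ≤ ‖v‖₂ :=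
  Real.sqrt_nonneg _

lemma enorm_sq (v : Fin M → ℝ) : ‖v‖₂ ^ 2 = esq v :=
  Real.sq_sqrt (esq_nonneg v)

lemma sum_mul_le_sum_mul_sum {ι : Type*} (s : Finset ι) {f g : ι → ℝ}
    (hf : ∀ k ∈ s, 0 ≤ f k) (hg : ∀ k ∈ s, 0 ≤ g k) :
    ∑ k ∈ s, f k * g k ≤ (∑ k ∈ s, f k) * ∑ k ∈ s, g k := by
  rw [Finset.sum_mul]
  exact Finset.sum_le_sum fun k hk =>
    mul_le_mul_of_nonneg_left (Finset.single_le_sum hg hk) (hf k hk)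

lemma abs_sum_mul_le_enorm_mul_enorm (u v : Fin M → ℝ) :
    |∑ k, u k * v k| ≤ ‖u‖₂ * ‖v‖₂ := by
  rw [enorm_eq_sqrt_esq, enorm_eq_sqrt_esq, ← Real.sqrt_mul (esq_nonneg u)]
  exact Real.abs_le_sqrt (Finset.sum_mul_sq_le_sq_mul_sq _ _ _)

lemma enorm_le_mul_enorm_of_abs_le {u v : Fin M → ℝ} {c : ℝ} (hc : 0 ≤ c)
    (h : ∀ k, |u k| ≤ c * |v k|) : ‖u‖₂ ≤ c * ‖v‖₂ := by
  rw [enorm_eq_sqrt_esq, enorm_eq_sqrt_esq, ← Real.sqrt_sq hc,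
    ← Real.sqrt_mul (sq_nonneg c), esq, esq, Finset.mul_sum]
  refine Real.sqrt_le_sqrt (Finset.sum_le_sum fun k _ => ?_)
  simpa only [mul_pow, sq_abs] using pow_le_pow_left₀ (abs_nonneg _) (h k) 2

lemma enorm_mul_le (u v : Fin M → ℝ) : ‖u * v‖₂ ≤ ‖u‖₂ * ‖v‖₂ := by
  rw [enorm_eq_sqrt_esq, enorm_eq_sqrt_esq, enorm_eq_sqrt_esq,
    ← Real.sqrt_mul (esq_nonneg u)]
  refine Real.sqrt_le_sqrt ?_
  simp only [esq, Pi.mul_apply, mul_pow]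
  exact sum_mul_le_sum_mul_sum _ (fun _ _ => sq_nonneg _) fun _ _ => sq_nonneg _

lemma abs_sum_mul_le_of_abs_le (w : Fin M → ℝ) {u v : Fin M → ℝ} {c : ℝ} (hc : 0 ≤ c)
    (h : ∀ k, |u k| ≤ c * |v k|) : |∑ k, w k * u k| ≤ c * (‖w‖₂ * ‖v‖₂) := by
  calc |∑ k, w k * u k| ≤ ‖w‖₂ * ‖u‖₂ := abs_sum_mul_le_enorm_mul_enorm w u
    _ ≤ ‖w‖₂ * (c * ‖v‖₂) :=
      mul_le_mul_of_nonneg_left (enorm_le_mul_enorm_of_abs_le hc h) (enorm_nonneg w)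
    _ = c * (‖w‖₂ * ‖v‖₂) := by ring

end Norms

lemma sq_le_five_mul_sum_sq_of_abs_le {t c r₁ r₂ r₃ r₄ r₅ : ℝ}
    (h : |t| ≤ c * (r₁ + r₂ + r₃ + r₄ + r₅)) :
    t ^ 2 ≤ 5 * c ^ 2 * (r₁ ^ 2 + r₂ ^ 2 + r₃ ^ 2 + r₄ ^ 2 + r₅ ^ 2) := by
  have hsum := sq_sum_le_card_mul_sum_sq (s := Finset.univ) (f := ![r₁, r₂, r₃, r₄, r₅])
  simp only [Fin.sum_univ_five, Finset.card_univ, Fintype.card_fin] at hsum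
  calc t ^ 2 ≤ (c * (r₁ + r₂ + r₃ + r₄ + r₅)) ^ 2 := by
        simpa only [sq_abs] using pow_le_pow_left₀ (abs_nonneg t) h 2
    _ = c ^ 2 * (r₁ + r₂ + r₃ + r₄ + r₅) ^ 2 := mul_pow _ _ _
    _ ≤ c ^ 2 * (5 * (r₁ ^ 2 + r₂ ^ 2 + r₃ ^ 2 + r₄ ^ 2 + r₅ ^ 2)) := by
        gcongr
        simpa using hsum
    _ = _ := by ring

lemma mul_le_constC1_of_le_max_one {Cσ Cσ' Bσ' x : ℝ} (hB : 0 ≤ Bσ') (hx : x ≤ max 1 Bσ') :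
    Bσ' * x ≤ constC1 Cσ Cσ' Bσ' :=
  (mul_le_mul_of_nonneg_left hx hB).trans (le_max_left _ _)

lemma mul_le_constC1_of_le_max {Cσ Cσ' Bσ' x : ℝ} (hC : 0 ≤ Cσ')
    (hx : x ≤ max (max 1 Bσ') Cσ) : Cσ' * x ≤ constC1 Cσ Cσ' Bσ' :=
  (mul_le_mul_of_nonneg_left hx hC).trans (le_max_right _ _)

lemma nonneg_of_abs_sub_le_mul_abs_sub {f : ℝ → ℝ} {C : ℝ}
    (h : ∀ z₁ z₂ : ℝ, |f z₁ - f z₂| ≤ C * |z₁ - z₂|) : 0 ≤ C := by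
  simpa using (abs_nonneg _).trans (h 1 0)

lemma abs_deriv_mul_add_sub_deriv_mul_le {σ : ℝ → ℝ} {Cσ' Bσ' : ℝ}
    (hbσ' : ∀ z : ℝ, |deriv σ z| ≤ Bσ')
    (hLσ' : ∀ z₁ z₂ : ℝ, |deriv σ z₁ - deriv σ z₂| ≤ Cσ' * |z₁ - z₂|)
    (z a g₁ g₂ u δ : ℝ) :
    |deriv σ z * (g₁ + g₂ + u) - deriv σ a * δ|
      ≤ Bσ' * (|g₁| + |g₂| + |u - δ|) + Cσ' * |z - a| * |δ| := by
  have hsplit : deriv σ z * (g₁ + g₂ + u) - deriv σ a * δ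
      = deriv σ z * g₁ + deriv σ z * g₂ + deriv σ z * (u - δ)
        + (deriv σ z - deriv σ a) * δ := by ring
  have hz := hbσ' z
  rw [hsplit]
  refine (abs_add_le _ _).trans ?_
  refine (add_le_add (abs_add_le _ _) le_rfl).trans ?_
  refine (add_le_add (add_le_add (abs_add_le _ _) le_rfl) le_rfl).trans ?_
  simp only [abs_mul]
  linarith [mul_le_mul_of_nonneg_right hz (abs_nonneg g₁),
    mul_le_mul_of_nonneg_right hz (abs_nonneg g₂),
    mul_le_mul_of_nonneg_right hz (abs_nonneg (u - δ)),
    mul_le_mul_of_nonneg_right (hLσ' z a) (abs_nonneg δ)]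

lemma abs_sum_mul_comp_add_sub_le {M : ℕ} {σ : ℝ → ℝ} {Cσ : ℝ}
    (hLσ : ∀ z₁ z₂ : ℝ, |σ z₁ - σ z₂| ≤ Cσ * |z₁ - z₂|) (w p q : Fin M → ℝ) (b a : ℝ) :
    |(∑ k, w k * σ (p k)) + b - a|
      ≤ Cσ * (‖w‖₂ * ‖p - q‖₂) + |(∑ k, w k * σ (q k)) + b - a| := by
  have hsplit : (∑ k, w k * σ (p k)) + b - a
      = ∑ k, w k * (σ (p k) - σ (q k)) + ((∑ k, w k * σ (q k)) + b - a) := by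
    simp only [mul_sub, Finset.sum_sub_distrib]
    ring
  rw [hsplit]
  exact (abs_add_le _ _).trans (add_le_add (abs_sum_mul_le_of_abs_le w
    (nonneg_of_abs_sub_le_mul_abs_sub hLσ) (v := p - q) fun k => hLσ _ _) le_rfl)

lemma abs_T2_entry_le {M : ℕ} {σ : ℝ → ℝ} {Cσ Cσ' Bσ' : ℝ}
    (hLσ : ∀ z₁ z₂ : ℝ, |σ z₁ - σ z₂| ≤ Cσ * |z₁ - z₂|)
    (hbσ' : ∀ z : ℝ, |deriv σ z| ≤ Bσ')
    (hLσ' : ∀ z₁ z₂ : ℝ, |deriv σ z₁ - deriv σ z₂| ≤ Cσ' * |z₁ - z₂|)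
    (w2 p w a1c d1c : Fin M → ℝ) (b2j a2j d2j : ℝ) :
    |deriv σ ((∑ k, w2 k * σ (p k)) + b2j) * (∑ k, w2 k * (deriv σ (p k) * w k))
        - deriv σ a2j * d2j|
      ≤ constC1 Cσ Cσ' Bσ' *
          (‖w2‖₂ * ‖w - d1c‖₂ + ‖w2‖₂ * (‖p - a1c‖₂ * ‖d1c‖₂)
            + |(∑ k, w2 k * (deriv σ (a1c k) * d1c k)) - d2j|
            + ‖w2‖₂ * ‖p - a1c‖₂ * |d2j|
            + |(∑ k, w2 k * σ (a1c k)) + b2j - a2j| * |d2j|) := by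
  have hB : 0 ≤ Bσ' := (abs_nonneg _).trans (hbσ' 0)
  have hCσ' := nonneg_of_abs_sub_le_mul_abs_sub hLσ'
  have hs : ∑ k, w2 k * (deriv σ (p k) * w k)
      = ∑ k, w2 k * (deriv σ (p k) * (w - d1c) k)
        + ∑ k, w2 k * ((deriv σ (p k) - deriv σ (a1c k)) * d1c k)
        + ∑ k, w2 k * (deriv σ (a1c k) * d1c k) := by
    simp only [← Finset.sum_add_distrib]
    exact Finset.sum_congr rfl fun k _ => by simp only [Pi.sub_apply]; ring
  have hg₁ : |∑ k, w2 k * (deriv σ (p k) * (w - d1c) k)| ≤ Bσ' * (‖w2‖₂ * ‖w - d1c‖₂) :=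
    abs_sum_mul_le_of_abs_le w2 hB fun k => by
      rw [abs_mul]
      exact mul_le_mul_of_nonneg_right (hbσ' _) (abs_nonneg _)
  have hg₂ : |∑ k, w2 k * ((deriv σ (p k) - deriv σ (a1c k)) * d1c k)|
      ≤ Cσ' * (‖w2‖₂ * (‖p - a1c‖₂ * ‖d1c‖₂)) := by
    refine (abs_sum_mul_le_of_abs_le w2 hCσ' (v := (p - a1c) * d1c) fun k => ?_).trans ?_
    · rw [abs_mul, Pi.mul_apply, abs_mul, ← mul_assoc]
      exact mul_le_mul_of_nonneg_right (hLσ' _ _) (abs_nonneg _)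
    · exact mul_le_mul_of_nonneg_left
        (mul_le_mul_of_nonneg_left (enorm_mul_le _ _) (enorm_nonneg _)) hCσ'
  have hz := abs_sum_mul_comp_add_sub_le hLσ w2 p a1c b2j a2j
  set C₁ := constC1 Cσ Cσ' Bσ'
  have hBB : Bσ' * Bσ' ≤ C₁ := mul_le_constC1_of_le_max_one hB (le_max_right _ _)
  have hB1 : Bσ' * 1 ≤ C₁ := mul_le_constC1_of_le_max_one hB (le_max_left _ _)
  have hCB : Cσ' * Bσ' ≤ C₁ :=
    mul_le_constC1_of_le_max hCσ' ((le_max_right _ _).trans (le_max_left _ _))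
  have hCC : Cσ' * Cσ ≤ C₁ := mul_le_constC1_of_le_max hCσ' (le_max_right _ _)
  have hC1 : Cσ' * 1 ≤ C₁ :=
    mul_le_constC1_of_le_max hCσ' ((le_max_left _ _).trans (le_max_left _ _))
  have hw2 := enorm_nonneg w2
  have hpa := enorm_nonneg (p - a1c)
  rw [hs]
  refine (abs_deriv_mul_add_sub_deriv_mul_le hbσ' hLσ' _ _ _ _ _ _).trans ?_
  linarith [mul_le_mul_of_nonneg_left hg₁ hB, mul_le_mul_of_nonneg_left hg₂ hB,
    mul_le_mul_of_nonneg_right (mul_le_mul_of_nonneg_left hz hCσ') (abs_nonneg d2j),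
    mul_le_mul_of_nonneg_right hBB (mul_nonneg hw2 (enorm_nonneg (w - d1c))),
    mul_le_mul_of_nonneg_right hCB (mul_nonneg hw2 (mul_nonneg hpa (enorm_nonneg d1c))),
    mul_le_mul_of_nonneg_right hB1 (abs_nonneg (∑ k, w2 k * (deriv σ (a1c k) * d1c k) - d2j)),
    mul_le_mul_of_nonneg_right hCC (mul_nonneg (mul_nonneg hw2 hpa) (abs_nonneg d2j)),
    mul_le_mul_of_nonneg_right hC1
      (mul_nonneg (abs_nonneg (∑ k, w2 k * σ (a1c k) + b2j - a2j)) (abs_nonneg d2j))]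

lemma esq_T2_column_le {M : ℕ} {σ : ℝ → ℝ} {Cσ Cσ' Bσ' : ℝ}
    (hLσ : ∀ z₁ z₂ : ℝ, |σ z₁ - σ z₂| ≤ Cσ * |z₁ - z₂|)
    (hbσ' : ∀ z : ℝ, |deriv σ z| ≤ Bσ')
    (hLσ' : ∀ z₁ z₂ : ℝ, |deriv σ z₁ - deriv σ z₂| ≤ Cσ' * |z₁ - z₂|)
    (W2 : Fin M → Fin M → ℝ) (b2 p w a1c a2c d1c d2c : Fin M → ℝ) :
    esq (fun j => deriv σ ((∑ k, W2 j k * σ (p k)) + b2 j)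
        * (∑ k, W2 j k * (deriv σ (p k) * w k)) - deriv σ (a2c j) * d2c j)
      ≤ 5 * constC1 Cσ Cσ' Bσ' ^ 2 *
          ((∑ j, esq (W2 j)) * esq (w - d1c)
            + esq (fun j => (∑ k, W2 j k * (deriv σ (a1c k) * d1c k)) - d2c j)
            + (∑ j, esq (W2 j)) * (esq d1c + esq d2c) * esq (p - a1c)
            + esq d2c * esq (fun j => (∑ k, W2 j k * σ (a1c k)) + b2 j - a2c j)) := by
  have hrow := fun j => sq_le_five_mul_sum_sq_of_abs_le
    (abs_T2_entry_le hLσ hbσ' hLσ' (W2 j) p w a1c d1c (b2 j) (a2c j) (d2c j))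
  simp only [mul_pow, enorm_sq, sq_abs] at hrow
  refine (Finset.sum_le_sum fun j _ => hrow j).trans ?_
  rw [← Finset.mul_sum]
  refine mul_le_mul_of_nonneg_left ?_ (by positivity)
  have hWd : ∑ j, esq (W2 j) * d2c j ^ 2 ≤ (∑ j, esq (W2 j)) * esq d2c :=
    sum_mul_le_sum_mul_sum _ (fun j _ => esq_nonneg (W2 j)) fun j _ => sq_nonneg (d2c j)
  have hed : ∑ j, ((∑ k, W2 j k * σ (a1c k)) + b2 j - a2c j) ^ 2 * d2c j ^ 2
      ≤ esq (fun j => (∑ k, W2 j k * σ (a1c k)) + b2 j - a2c j) * esq d2c :=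
    sum_mul_le_sum_mul_sum _ (fun j _ => sq_nonneg _) fun j _ => sq_nonneg (d2c j)
  have hWpd : ∑ j, esq (W2 j) * esq (p - a1c) * d2c j ^ 2
      = esq (p - a1c) * ∑ j, esq (W2 j) * d2c j ^ 2 := by
    rw [Finset.mul_sum]
    exact Finset.sum_congr rfl fun j _ => by ring
  simp only [Finset.sum_add_distrib, ← Finset.sum_mul, hWpd]
  have hWpd_le := mul_le_mul_of_nonneg_left hWd (esq_nonneg (p - a1c))
  unfold esq at hWpd_le hed ⊢
  linarith

theorem first_derivative_output_mismatch_summed_bound_general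
    {d M N : ℕ}
    (σ : ℝ → ℝ) (Cσ Cσ' Bσ' : ℝ)
    (hLσ : ∀ z₁ z₂ : ℝ, |σ z₁ - σ z₂| ≤ Cσ * |z₁ - z₂|)
    (hbσ' : ∀ z : ℝ, |deriv σ z| ≤ Bσ')
    (hLσ' : ∀ z₁ z₂ : ℝ, |deriv σ z₁ - deriv σ z₂| ≤ Cσ' * |z₁ - z₂|)
    (W1 : Fin M → Fin d → ℝ) (b1 : Fin M → ℝ)
    (W2 : Fin M → Fin M → ℝ) (b2 : Fin M → ℝ)
    (X : Fin d → Fin N → ℝ)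
    (a1 a2 : Fin M → Fin N → ℝ)
    (d1 d2 : Fin d → Fin M → Fin N → ℝ)
    (i : Fin d) :
    (∑ n, esq (T2col σ W1 b1 W2 b2 (fun i' => X i' n) a2 d2 i n))
      ≤ 5 * constC1 Cσ Cσ' Bσ' ^ 2 *
          ∑ n,
            ((∑ j, ∑ k, (W2 j k) ^ 2) * esq (fun k => W1 k i - d1 i k n)
              + esq (fun j => (∑ k, W2 j k * (deriv σ (a1 k n) * d1 i k n)) - d2 i j n)
              + (∑ j, ∑ k, (W2 j k) ^ 2) *
                  (esq (fun k => d1 i k n) + esq (fun k => d2 i k n)) *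
                  esq (fun k => (∑ i', W1 k i' * X i' n) + b1 k - a1 k n)
              + esq (fun k => d2 i k n) *
                  esq (fun j => (∑ k, W2 j k * σ (a1 k n)) + b2 j - a2 j n)) := by
  rw [Finset.mul_sum]
  exact Finset.sum_le_sum fun n _ => esq_T2_column_le hLσ hbσ' hLσ' W2 b2
    (fun k => (∑ i', W1 k i' * X i' n) + b1 k) (fun k => W1 k i) (fun k => a1 k n)
    (fun j => a2 j n) (fun k => d1 i k n) (fun k => d2 i k n)

/-- **Inequality (A.7)** (summed squared bound on the first-derivative output
mismatch): `‖T_{2i}‖_F² = Σ_n ‖T_{2i}[n]‖₂²` is bounded by `5C₁²` times the sum of the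
four squared mismatch terms. -/
theorem first_derivative_output_mismatch_summed_bound
    {d M N : ℕ} (hd : 0 < d) (hM : 0 < M) (hN : 0 < N)
    (σ : ℝ → ℝ) (Cσ Cσ' Bσ' : ℝ)
    (hLσ : ∀ z₁ z₂ : ℝ, |σ z₁ - σ z₂| ≤ Cσ * |z₁ - z₂|)
    (hbσ' : ∀ z : ℝ, |deriv σ z| ≤ Bσ')
    (hLσ' : ∀ z₁ z₂ : ℝ, |deriv σ z₁ - deriv σ z₂| ≤ Cσ' * |z₁ - z₂|)
    (W1 : Fin M → Fin d → ℝ) (b1 : Fin M → ℝ)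
    (W2 : Fin M → Fin M → ℝ) (b2 : Fin M → ℝ)
    (X : Fin d → Fin N → ℝ)
    (a1 a2 : Fin M → Fin N → ℝ)
    (d1 d2 : Fin d → Fin M → Fin N → ℝ)
    (i : Fin d) :
    (∑ n, esq (T2col σ W1 b1 W2 b2 (fun i' => X i' n) a2 d2 i n))
      ≤ 5 * constC1 Cσ Cσ' Bσ' ^ 2 *
          ∑ n,
            ((∑ j, ∑ k, (W2 j k) ^ 2) * esq (fun k => W1 k i - d1 i k n)
              + esq (fun j => (∑ k, W2 j k * (deriv σ (a1 k n) * d1 i k n)) - d2 i j n)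
              + (∑ j, ∑ k, (W2 j k) ^ 2) *
                  (esq (fun k => d1 i k n) + esq (fun k => d2 i k n)) *
                  esq (fun k => (∑ i', W1 k i' * X i' n) + b1 k - a1 k n)
              + esq (fun k => d2 i k n) *
                  esq (fun j => (∑ k, W2 j k * σ (a1 k n)) + b2 j - a2 j n)) :=
  first_derivative_output_mismatch_summed_bound_general σ Cσ Cσ' Bσ' hLσ hbσ' hLσ' W1 b1 W2 b2 X a1
    a2 d1 d2 i
end
end
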